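/- arXiv:2102.11681 — 4 statements merged into one kernel-verified Lean document; each statement's English description precedes it below -/
import Mathlib

section
/- Let p > q ≥ 0, d, m ≥ 1 be integers, A(λ) = I_d λ^p + A_1 λ^{p−1} + … + A_p a monic λ-matrix with A_1,…,A_p ∈ ℂ^{d×d}, and B(λ) = B_0 λ^q + … + B_q with B_0,…,B_q ∈ ℂ^{d×m}. Suppose R_1,…,R_p ∈ ℂ^{d×d} are right solvents of A(λ) (i.e. R_k^p + A_1 R_k^{p−1} + … + A_{p−1} R_k + A_p = 0 for each k) and the block Vandermonde matrix V(R_1,…,R_p) is invertible. Define G_1,…,G_p ∈ ℂ^{d×m} by stacking (G_1^T,…,G_p^T)^T = V(R_1,…,R_p)^{−1} B^*. Then for every t ∈ ℝ, C^* exp(t A^*) B^* = Σ_{k=1}^p exp(t R_k) G_k, where exp denotes the matrix exponential. -/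
open Matrix

abbrev Mat (d e : ℕ) := Matrix (Fin d) (Fin e) ℂ

/-- The block Vandermonde matrix: the `(i,j)`-th `d×d` block is `R j ^ i` (0-indexed). -/
def vand (p d : ℕ) (R : Fin p → Mat d d) : Matrix (Fin p × Fin d) (Fin p × Fin d) ℂ :=
  fun x y => (R y.1 ^ (x.1 : ℕ)) x.2 y.2

/-- The companion matrix `A^*` of the monic λ-matrix `I_d λ^p + A_1 λ^{p-1} + … + A_p`,
where `A i` denotes `A_{i+1}`. -/
def companion (p d : ℕ) (A : Fin p → Mat d d) : Matrix (Fin p × Fin d) (Fin p × Fin d) ℂ :=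
  fun x y =>
    if (x.1 : ℕ) + 1 = p then (-(A y.1.rev)) x.2 y.2
    else if (y.1 : ℕ) = (x.1 : ℕ) + 1 then (1 : Mat d d) x.2 y.2 else 0

/-- `C^* = (I_d, 0, …, 0)`. -/
def Cstar (p d : ℕ) : Matrix (Fin d) (Fin p × Fin d) ℂ :=
  fun a y => if (y.1 : ℕ) = 0 then (1 : Mat d d) a y.2 else 0

/-- The stacked matrix `B^* = (β_1^T, …, β_p^T)^T`, where `β i = β_{i+1}`. -/
def Bstar (p d m : ℕ) (β : Fin p → Mat d m) : Matrix (Fin p × Fin d) (Fin m) ℂ :=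
  fun x c => β x.1 x.2 c

/-- `R` is a right solvent of `I_d λ^p + A_1 λ^{p-1} + … + A_p`, where `A i = A_{i+1}`. -/
def IsRightSolvent (p d : ℕ) (A : Fin p → Mat d d) (R : Mat d d) : Prop :=
  R ^ p + ∑ i : Fin p, A i * R ^ (p - 1 - (i : ℕ)) = 0

/-! Each block column `v_k = (I, R_k, …, R_k^{p-1})ᵀ` of the block Vandermonde matrix satisfies
`A^* v_k = v_k R_k` because `R_k` is a right solvent (the first `p - 1` block rows just shift the
powers, the last one is `-∑ A_i R_k^{p-i} = R_k^p`). Hence `exp (t A^*) v_k = v_k exp (t R_k)`, while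
`C^* v_k = I`. Writing `B^* = V (V⁻¹ B^*) = ∑ v_k G_k` gives
`C^* exp (t A^*) B^* = ∑ C^* v_k exp (t R_k) G_k = ∑ exp (t R_k) G_k`. -/

open NormedSpace

namespace Matrix

theorem mul_eq_sum_submatrix_prodMk {l o n m α : Type*} [Fintype o] [Fintype n]
    [NonUnitalNonAssocSemiring α] (M : Matrix l (o × n) α) (Y : Matrix (o × n) m α) :
    M * Y = ∑ k, M.submatrix id (Prod.mk k) * Y.submatrix (Prod.mk k) id := by
  ext x c
  simp [mul_apply, sum_apply, Fintype.sum_prod_type]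

variable {n m : Type*} [Fintype n] [DecidableEq n] [Fintype m] [DecidableEq m]

theorem pow_mul_of_mul_eq_mul {α : Type*} [Semiring α]
    {M : Matrix n n α} {N : Matrix m m α} {X : Matrix n m α} (h : M * X = X * N) (k : ℕ) :
    M ^ k * X = X * N ^ k := by
  induction k with
  | zero => simp
  | succ k ih =>
    rw [pow_succ, Matrix.mul_assoc, h, ← Matrix.mul_assoc, ih, Matrix.mul_assoc, pow_succ]

variable {𝕂 : Type*} [RCLike 𝕂]

-- The exponential series needs some norm to converge; `exp` itself does not depend on it.
open scoped Norms.Operator in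
theorem exp_mul_of_mul_eq_mul {M : Matrix n n 𝕂} {N : Matrix m m 𝕂} {X : Matrix n m 𝕂}
    (h : M * X = X * N) : exp M * X = X * exp N := by
  have hM : HasSum (fun k => ((Nat.factorial k)⁻¹ : 𝕂) • M ^ k * X) (exp M * X) :=
    (exp_series_hasSum_exp' M).map (AddMonoidHom.mk' (· * X) fun _ _ => Matrix.add_mul _ _ _)
      (continuous_id.matrix_mul continuous_const)
  have hN : HasSum (fun k => X * (((Nat.factorial k)⁻¹ : 𝕂) • N ^ k)) (X * exp N) :=
    (exp_series_hasSum_exp' N).map (AddMonoidHom.mk' (X * ·) fun _ _ => Matrix.mul_add _ _ _)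
      (continuous_const.matrix_mul continuous_id)
  refine hM.unique ?_
  simpa only [Matrix.mul_smul, Matrix.smul_mul, pow_mul_of_mul_eq_mul h] using hN

end Matrix

def vandCol (p d : ℕ) (S : Mat d d) : Matrix (Fin p × Fin d) (Fin d) ℂ :=
  fun x b => (S ^ (x.1 : ℕ)) x.2 b

theorem vand_submatrix_prodMk (p d : ℕ) (R : Fin p → Mat d d) (k : Fin p) :
    (vand p d R).submatrix id (Prod.mk k) = vandCol p d (R k) :=
  rfl

theorem vandCol_mul_self_apply (p d : ℕ) (S : Mat d d) (i : Fin p) (a b : Fin d) :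
    (vandCol p d S * S) (i, a) b = (S ^ ((i : ℕ) + 1)) a b := by
  rw [pow_succ, mul_apply, mul_apply]
  rfl

theorem IsRightSolvent.sum_rev_mul_pow {p d : ℕ} {A : Fin p → Mat d d} {S : Mat d d}
    (hS : IsRightSolvent p d A S) : ∑ k : Fin p, A k.rev * S ^ (k : ℕ) = -S ^ p := by
  have hrev : ∑ k : Fin p, A k.rev * S ^ (k : ℕ) = ∑ k : Fin p, A k * S ^ (p - 1 - (k : ℕ)) := by
    rw [← Equiv.sum_comp Fin.revPerm]
    refine Finset.sum_congr rfl fun k _ => ?_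
    simp only [Fin.revPerm_apply, Fin.rev_rev, Fin.val_rev]
    congr 2
    omega
  rw [hrev, eq_neg_iff_add_eq_zero, add_comm]
  exact hS

theorem companion_mul_vandCol {p d : ℕ} {A : Fin p → Mat d d} {S : Mat d d}
    (hS : IsRightSolvent p d A S) : companion p d A * vandCol p d S = vandCol p d S * S := by
  ext ⟨i, a⟩ b
  rw [vandCol_mul_self_apply, mul_apply, Fintype.sum_prod_type]
  by_cases hlast : (i : ℕ) + 1 = p
  · calc ∑ k : Fin p, ∑ c : Fin d, companion p d A (i, a) (k, c) * vandCol p d S (k, c) b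
          = (∑ k : Fin p, -(A k.rev * S ^ (k : ℕ))) a b := by
            simp [companion, hlast, vandCol, Matrix.sum_apply, mul_apply]
        _ = (S ^ ((i : ℕ) + 1)) a b := by
            rw [Finset.sum_neg_distrib, hS.sum_rev_mul_pow, neg_neg, hlast]
  · have hnext : (i : ℕ) + 1 < p := by omega
    rw [Fintype.sum_eq_single ⟨(i : ℕ) + 1, hnext⟩]
    · simp [companion, hlast, vandCol, Matrix.one_apply]
    · intro k hk
      have : (k : ℕ) ≠ (i : ℕ) + 1 := fun h => hk (Fin.ext h)
      simp [companion, hlast, this]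

theorem Cstar_mul_vandCol {p : ℕ} (hp : 0 < p) (d : ℕ) (S : Mat d d) :
    Cstar p d * vandCol p d S = 1 := by
  ext a b
  rw [mul_apply, Fintype.sum_prod_type, Fintype.sum_eq_single ⟨0, hp⟩]
  · simp [Cstar, vandCol, Matrix.one_apply]
  · intro k hk
    have : (k : ℕ) ≠ 0 := fun h => hk (Fin.ext h)
    simp [Cstar, this]

theorem stmt_0 (p d m : ℕ)
    (A : Fin p → Mat d d)
    (β : Fin p → Mat d m)
    (R : Fin p → Mat d d) (hR : ∀ k, IsRightSolvent p d A (R k))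
    (hV : IsUnit (vand p d R))
    -- `G` is defined by stacking: `(G_1^T,…,G_p^T)^T = V(R_1,…,R_p)⁻¹ B^*`
    (G : Fin p → Mat d m)
    (hG : ∀ (k : Fin p) (a : Fin d) (c : Fin m),
      G k a c = ((vand p d R)⁻¹ * Bstar p d m β) (k, a) c) :
    ∀ t : ℝ,
      Cstar p d * NormedSpace.exp ((t : ℂ) • companion p d A) * Bstar p d m β =
        ∑ k : Fin p, NormedSpace.exp ((t : ℂ) • R k) * G k := by
  intro t
  have hB : Bstar p d m β = ∑ k, vandCol p d (R k) * G k := by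
    have hdet := (isUnit_iff_isUnit_det _).mp hV
    calc Bstar p d m β = vand p d R * ((vand p d R)⁻¹ * Bstar p d m β) := by
          rw [← Matrix.mul_assoc, mul_nonsing_inv _ hdet, Matrix.one_mul]
      _ = ∑ k, vandCol p d (R k) * G k := by
          rw [mul_eq_sum_submatrix_prodMk]
          refine Finset.sum_congr rfl fun k _ => ?_
          rw [vand_submatrix_prodMk]
          congr 1
          ext a c
          exact (hG k a c).symm
  have hexp (k : Fin p) : exp ((t : ℂ) • companion p d A) * vandCol p d (R k) =
      vandCol p d (R k) * exp ((t : ℂ) • R k) :=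
    exp_mul_of_mul_eq_mul <| by rw [smul_mul, companion_mul_vandCol (hR k), Matrix.mul_smul]
  rw [hB, Matrix.mul_sum]
  refine Finset.sum_congr rfl fun k _ => ?_
  rw [← Matrix.mul_assoc, Matrix.mul_assoc _ (exp _), hexp, ← Matrix.mul_assoc,
    Cstar_mul_vandCol k.pos, Matrix.one_mul]
end

section
/- Let p > q ≥ 0, d, m ≥ 1, A(λ) = I_d λ^p + A_1 λ^{p−1} + … + A_p with A_1,…,A_p ∈ ℂ^{d×d}, and B(λ) = B_0 λ^q + … + B_q with B_0,…,B_q ∈ ℂ^{d×m}. Suppose R_1,…,R_p ∈ ℂ^{d×d} are right solvents of A(λ) with σ(A(·)) = ⋃_{k=1}^p σ(R_k) and V(R_1,…,R_p) invertible, and define G_1,…,G_p ∈ ℂ^{d×m} by (G_1^T,…,G_p^T)^T = V(R_1,…,R_p)^{−1} (A^#)^{−1} B^#. Then for every λ ∈ ℂ with det A(λ) ≠ 0, each λ I_d − R_k is invertible and A(λ)^{−1} B(λ) = Σ_{k=1}^p (λ I_d − R_k)^{−1} G_k. -/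
open Matrix

/-- Evaluation of the monic λ-matrix `A(λ) = I_d λ^p + A_1 λ^{p-1} + … + A_p`,
where `A i` denotes `A_{i+1}`. -/
noncomputable def Apoly (p d : ℕ) (A : Fin p → Mat d d) (z : ℂ) : Mat d d :=
  z ^ p • 1 + ∑ i : Fin p, z ^ (p - 1 - (i : ℕ)) • A i

/-- Evaluation of the λ-matrix `B(λ) = B_0 λ^q + … + B_q`, where `B j` denotes `B_j`. -/
noncomputable def Bpoly (q d m : ℕ) (B : Fin (q + 1) → Mat d m) (z : ℂ) : Mat d m :=
  ∑ j : Fin (q + 1), z ^ (q - (j : ℕ)) • B j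

/-- The lower block-triangular block-Toeplitz matrix `A^#` with blocks `I_d` on the block
diagonal and `A_i` on the `i`-th block subdiagonal, where `A i = A_{i+1}`. -/
def Ahash (p d : ℕ) (A : Fin p → Mat d d) : Matrix (Fin p × Fin d) (Fin p × Fin d) ℂ :=
  fun x y =>
    if x.1 = y.1 then (1 : Mat d d) x.2 y.2
    else if h : (y.1 : ℕ) < (x.1 : ℕ) then
      (A ⟨(x.1 : ℕ) - (y.1 : ℕ) - 1, by have := x.1.isLt; omega⟩) x.2 y.2
    else 0

/-- The stacked matrix `B^# = (0_{(p-(q+1))d × m}^T, B_0^T, …, B_q^T)^T`. -/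
def Bhash (p q d m : ℕ) (B : Fin (q + 1) → Mat d m) : Matrix (Fin p × Fin d) (Fin m) ℂ :=
  fun x c =>
    if h : p - q - 1 ≤ (x.1 : ℕ) then
      B ⟨(x.1 : ℕ) - (p - q - 1), by have := x.1.isLt; omega⟩ x.2 c
    else 0

/-! A right solvent `R` makes `λI - R` a right divisor of `A(λ)`: by Horner's scheme
`A(λ) = (∑ j < p, λ^(p-1-j) H_j(R)) (λI - R)` with `H_j(R) = ∑ i ≤ j, c_(j-i) R^i`, where
`c_0 = I, c_1 = A_1, …` are the coefficients of `A`. So `det A(λ) ≠ 0` forces `λI - R_k` to be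
invertible, and `A(λ) (λI - R_k)⁻¹ = ∑ j, λ^(p-1-j) H_j(R_k)`. The `(j, k)` block of `A^# V` is
exactly `H_j(R_k)`, so `A^# V G = B^#` says `∑ k, H_j(R_k) G_k = B_(j-(p-q-1))` (zero for small `j`);
weighting the `j`-th of these by `λ^(p-1-j)` and summing gives `A(λ) ∑ k, (λI - R_k)⁻¹ G_k = B(λ)`.
-/

open Finset

section Horner

variable {K S : Type*} [CommRing K] [Ring S] [Algebra K S]

/-- The coefficient of `λ^(n-1-j)` in the right quotient of `∑ i ≤ n, c i λ^(n-i)` by `λ - r`. -/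
def hornerCoeff (c : ℕ → S) (r : S) (j : ℕ) : S :=
  ∑ i ∈ range (j + 1), c (j - i) * r ^ i

theorem hornerCoeff_zero (c : ℕ → S) (r : S) : hornerCoeff c r 0 = c 0 := by
  simp [hornerCoeff]

theorem hornerCoeff_succ (c : ℕ → S) (r : S) (j : ℕ) :
    hornerCoeff c r (j + 1) = hornerCoeff c r j * r + c (j + 1) := by
  rw [hornerCoeff, sum_range_succ', hornerCoeff, sum_mul]
  simp [pow_succ, mul_assoc]

theorem sum_range_ite_mul_pow_eq_hornerCoeff (c : ℕ → S) (r : S) {j n : ℕ} (hj : j < n) :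
    ∑ i ∈ range n, (if i ≤ j then c (j - i) else 0) * r ^ i = hornerCoeff c r j := by
  simp only [ite_mul, zero_mul]
  rw [← sum_filter, hornerCoeff]
  congr 1
  ext i
  simp only [mem_filter, mem_range]
  omega

theorem hornerCoeff_eq_sum_mul_pow_sub (c : ℕ → S) (r : S) (j : ℕ) :
    hornerCoeff c r j = ∑ i ∈ range (j + 1), c i * r ^ (j - i) := by
  rw [hornerCoeff, ← sum_range_reflect]
  refine sum_congr rfl fun i hi => ?_
  have := mem_range.1 hi
  congr 3
  omega

theorem sum_smul_hornerCoeff_mul_sub (c : ℕ → S) (r : S) (z : K) (n : ℕ) :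
    (∑ j ∈ range n, z ^ (n - 1 - j) • hornerCoeff c r j) * (z • 1 - r) =
      ∑ i ∈ range (n + 1), z ^ (n - i) • c i - hornerCoeff c r n := by
  induction n with
  | zero => simp [hornerCoeff_zero]
  | succ n ih =>
    have shift : ∀ f : ℕ → S, ∑ j ∈ range (n + 1), z ^ (n + 1 - 1 - j) • f j =
        z • ∑ j ∈ range n, z ^ (n - 1 - j) • f j + f n := fun f => by
      rw [sum_range_succ, smul_sum, Nat.add_sub_cancel, Nat.sub_self, pow_zero, one_smul]
      congr 1
      refine sum_congr rfl fun j hj => ?_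
      rw [smul_smul, ← pow_succ']
      congr 2
      have := mem_range.1 hj
      omega
    rw [shift, add_mul, smul_mul_assoc, ih, sum_range_succ _ (n + 1), hornerCoeff_succ,
      Nat.sub_self, pow_zero, one_smul, smul_sub, smul_sum, mul_sub, mul_smul_comm, mul_one]
    have hpow : ∑ i ∈ range (n + 1), z • z ^ (n - i) • c i =
        ∑ i ∈ range (n + 1), z ^ (n + 1 - i) • c i :=
      sum_congr rfl fun i hi => by
        rw [smul_smul, ← pow_succ', Nat.sub_add_comm (Nat.lt_succ_iff.1 (mem_range.1 hi))]
    rw [hpow]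
    abel

end Horner

def Acoeff (p d : ℕ) (A : Fin p → Mat d d) : ℕ → Mat d d
  | 0 => 1
  | i + 1 => if h : i < p then A ⟨i, h⟩ else 0

section Solvents

variable {p d : ℕ} {A : Fin p → Mat d d}

theorem sum_Acoeff_succ {M : Type*} [AddCommMonoid M] (f : ℕ → Mat d d → M) :
    ∑ i ∈ range p, f i (Acoeff p d A (i + 1)) = ∑ i : Fin p, f i (A i) := by
  rw [← Fin.sum_univ_eq_sum_range]
  simp [Acoeff]

theorem Apoly_eq_sum_Acoeff (z : ℂ) :
    Apoly p d A z = ∑ i ∈ range (p + 1), z ^ (p - i) • Acoeff p d A i := by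
  rw [sum_range_succ', Apoly, add_comm, ← sum_Acoeff_succ (fun i M => z ^ (p - 1 - i) • M)]
  simp [Acoeff, Nat.sub_sub, add_comm]

theorem IsRightSolvent.hornerCoeff_eq_zero {R : Mat d d} (hR : IsRightSolvent p d A R) :
    hornerCoeff (Acoeff p d A) R p = 0 := by
  rw [hornerCoeff_eq_sum_mul_pow_sub, sum_range_succ',
    sum_Acoeff_succ (fun i M => M * R ^ (p - (i + 1)))]
  simpa [IsRightSolvent, Acoeff, Nat.sub_sub, add_comm] using hR

theorem IsRightSolvent.Apoly_eq_mul_sub {R : Mat d d} (hR : IsRightSolvent p d A R) (z : ℂ) :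
    Apoly p d A z =
      (∑ j ∈ range p, z ^ (p - 1 - j) • hornerCoeff (Acoeff p d A) R j) * (z • 1 - R) := by
  rw [sum_smul_hornerCoeff_mul_sub, hR.hornerCoeff_eq_zero, sub_zero, Apoly_eq_sum_Acoeff]

theorem IsRightSolvent.isUnit_sub {R : Mat d d} (hR : IsRightSolvent p d A R) {z : ℂ}
    (hz : det (Apoly p d A z) ≠ 0) : IsUnit (z • 1 - R) := by
  rw [hR.Apoly_eq_mul_sub, det_mul] at hz
  exact (isUnit_iff_isUnit_det _).2 (right_ne_zero_of_mul hz).isUnit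

theorem IsRightSolvent.Apoly_mul_inv_sub {R : Mat d d} (hR : IsRightSolvent p d A R) {z : ℂ}
    (hz : det (Apoly p d A z) ≠ 0) :
    Apoly p d A z * (z • 1 - R)⁻¹ =
      ∑ j : Fin p, z ^ (p - 1 - (j : ℕ)) • hornerCoeff (Acoeff p d A) R j := by
  rw [hR.Apoly_eq_mul_sub, mul_nonsing_inv_cancel_right _ _
    ((isUnit_iff_isUnit_det _).1 (hR.isUnit_sub hz)), Fin.sum_univ_eq_sum_range
      (fun j => z ^ (p - 1 - j) • hornerCoeff (Acoeff p d A) R j)]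

end Solvents

section BlockMatrices

variable {p d : ℕ} {A : Fin p → Mat d d}

theorem Ahash_apply (j i : Fin p) (a b : Fin d) :
    Ahash p d A (j, a) (i, b) = (if i ≤ j then Acoeff p d A (j - i) else 0) a b := by
  rcases lt_trichotomy i j with hij | rfl | hij
  · obtain ⟨t, ht⟩ := Nat.exists_eq_add_of_lt hij
    simp [Ahash, hij.ne', hij.le, ht, Acoeff, show t < p by omega, add_assoc]
  · simp [Ahash, Acoeff]
  · simp [Ahash, hij.ne, hij.asymm, not_le.2 hij]

theorem det_Ahash : det (Ahash p d A) = 1 := by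
  have hlower : (Ahash p d A).submatrix ofLex ofLex |>.IsLowerTriangular := by
    intro x y hxy
    obtain hlt | ⟨heq, hlt⟩ := Prod.Lex.lt_iff.1 (show x < y from hxy)
    · simp [Ahash, hlt.ne, hlt.asymm]
    · simp [Ahash, heq, hlt.ne]
  rw [← det_submatrix_equiv_self ofLex, det_of_isLowerTriangular _ hlower]
  simp [Ahash]

theorem Ahash_mul_vand_apply (R : Fin p → Mat d d) (j k : Fin p) (a b : Fin d) :
    (Ahash p d A * vand p d R) (j, a) (k, b) = hornerCoeff (Acoeff p d A) (R k) j a b := by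
  rw [← sum_range_ite_mul_pow_eq_hornerCoeff _ _ j.isLt, ← Fin.sum_univ_eq_sum_range
    (fun i => (if i ≤ j then Acoeff p d A (j - i) else 0) * R k ^ i), Matrix.sum_apply,
    mul_apply, Fintype.sum_prod_type]
  simp only [Ahash_apply, vand, mul_apply, Fin.le_iff_val_le_val]

theorem Ahash_mul_vand_mul_submatrix {m : ℕ} (R : Fin p → Mat d d)
    (X : Matrix (Fin p × Fin d) (Fin m) ℂ) (j : Fin p) :
    (Ahash p d A * vand p d R * X).submatrix (Prod.mk j) id =
      ∑ k : Fin p, hornerCoeff (Acoeff p d A) (R k) j * X.submatrix (Prod.mk k) id := by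
  ext a c
  rw [submatrix_apply, mul_apply, Fintype.sum_prod_type, Matrix.sum_apply]
  simp_rw [Ahash_mul_vand_apply, mul_apply, submatrix_apply]

theorem sum_smul_Bhash_submatrix {q m : ℕ} (hq : q < p) (B : Fin (q + 1) → Mat d m)
    (z : ℂ) :
    ∑ j : Fin p, z ^ (p - 1 - (j : ℕ)) • (Bhash p q d m B).submatrix (Prod.mk j) id =
      Bpoly q d m B z := by
  obtain ⟨s, rfl⟩ : ∃ s, p = s + (q + 1) := ⟨p - (q + 1), by omega⟩
  have hs : s + (q + 1) - q - 1 = s := by omega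
  rw [Fin.sum_univ_add, Fintype.sum_eq_zero _ fun i => ?_, zero_add, Bpoly]
  · refine Fintype.sum_congr _ _ fun t => ?_
    ext a c
    simp [Bhash, hs, Nat.add_sub_add_left]
  · ext a c
    simp [Bhash, hs, i.isLt]

end BlockMatrices

theorem stmt_2_general (p q d m : ℕ) (hq : q < p)
    (A : Fin p → Mat d d) (B : Fin (q + 1) → Mat d m)
    (R : Fin p → Mat d d) (hR : ∀ k, IsRightSolvent p d A (R k))
    (hV : IsUnit (vand p d R))
    -- `(G_1^T,…,G_p^T)^T = V(R_1,…,R_p)⁻¹ (A^#)⁻¹ B^#`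
    (G : Fin p → Mat d m)
    (hG : ∀ (k : Fin p) (a : Fin d) (c : Fin m),
      G k a c = ((vand p d R)⁻¹ * (Ahash p d A)⁻¹ * Bhash p q d m B) (k, a) c) :
    ∀ z : ℂ, det (Apoly p d A z) ≠ 0 →
      (∀ k : Fin p, IsUnit (z • (1 : Mat d d) - R k)) ∧
      (Apoly p d A z)⁻¹ * Bpoly q d m B z =
        ∑ k : Fin p, (z • (1 : Mat d d) - R k)⁻¹ * G k := by
  intro z hz
  refine ⟨fun k => (hR k).isUnit_sub hz, ?_⟩
  set X := (vand p d R)⁻¹ * (Ahash p d A)⁻¹ * Bhash p q d m B with hXdef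
  have hGX : ∀ k, G k = X.submatrix (Prod.mk k) id := fun k => by ext a c; exact hG k a c
  have hX : Ahash p d A * vand p d R * X = Bhash p q d m B := by
    rw [hXdef, Matrix.mul_assoc, Matrix.mul_assoc (vand p d R)⁻¹,
      mul_nonsing_inv_cancel_left _ _ ((isUnit_iff_isUnit_det _).1 hV),
      mul_nonsing_inv_cancel_left _ _ (by rw [det_Ahash]; exact isUnit_one)]
  suffices Apoly p d A z * ∑ k : Fin p, (z • (1 : Mat d d) - R k)⁻¹ * G k = Bpoly q d m B z by
    rw [← this, nonsing_inv_mul_cancel_left _ _ (isUnit_iff_ne_zero.2 hz)]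
  calc Apoly p d A z * ∑ k : Fin p, (z • (1 : Mat d d) - R k)⁻¹ * G k
      = ∑ k : Fin p, (Apoly p d A z * (z • (1 : Mat d d) - R k)⁻¹) * G k := by
        simp only [Matrix.mul_sum, Matrix.mul_assoc]
    _ = ∑ j : Fin p, z ^ (p - 1 - (j : ℕ)) •
          ∑ k : Fin p, hornerCoeff (Acoeff p d A) (R k) j * G k := by
        simp only [(hR _).Apoly_mul_inv_sub hz, Matrix.sum_mul, Matrix.smul_mul, smul_sum]
        exact sum_comm
    _ = Bpoly q d m B z := by
        simp only [hGX, ← Ahash_mul_vand_mul_submatrix, hX, sum_smul_Bhash_submatrix hq]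

theorem stmt_2 (p q d m : ℕ) (hq : q < p) (hd : 0 < d) (hm : 0 < m)
    (A : Fin p → Mat d d) (B : Fin (q + 1) → Mat d m)
    (R : Fin p → Mat d d) (hR : ∀ k, IsRightSolvent p d A (R k))
    -- `σ(A(·)) = ⋃_{k=1}^p σ(R_k)`
    (hspec : ∀ z : ℂ, det (Apoly p d A z) = 0 ↔
      ∃ k : Fin p, det (z • (1 : Mat d d) - R k) = 0)
    (hV : IsUnit (vand p d R))
    -- `(G_1^T,…,G_p^T)^T = V(R_1,…,R_p)⁻¹ (A^#)⁻¹ B^#`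
    (G : Fin p → Mat d m)
    (hG : ∀ (k : Fin p) (a : Fin d) (c : Fin m),
      G k a c = ((vand p d R)⁻¹ * (Ahash p d A)⁻¹ * Bhash p q d m B) (k, a) c) :
    ∀ z : ℂ, det (Apoly p d A z) ≠ 0 →
      (∀ k : Fin p, IsUnit (z • (1 : Mat d d) - R k)) ∧
      (Apoly p d A z)⁻¹ * Bpoly q d m B z =
        ∑ k : Fin p, (z • (1 : Mat d d) - R k)⁻¹ * G k :=
  stmt_2_general p q d m hq A B R hR hV G hG
end

section
/- Let R_1,…,R_p ∈ ℂ^{d×d} be right solvents of the monic λ-matrix A(λ) = I_d λ^p + A_1 λ^{p−1} + … + A_{p−1} λ + A_p such that the block Vandermonde matrix V(R_1,…,R_p) is invertible (equivalently, R_1,…,R_p form a complete set of regular right solvents). Then the block row of coefficients satisfies [A_p, A_{p−1}, …, A_1] = −[R_1^p, R_2^p, …, R_p^p] V(R_1,…,R_p)^{−1}. -/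
/-! Evaluating `A(λ)` at the solvent `R k` gives the `k`-th block column of
`[A_p, …, A_1] V(R_1, …, R_p) = -[R_1^p, …, R_p^p]`; multiply on the right by `V⁻¹`. -/

open Matrix

/-- The block row `(R 0 ^ p, …, R (p-1) ^ p)`. -/
def powRow (p d : ℕ) (R : Fin p → Mat d d) : Matrix (Fin d) (Fin p × Fin d) ℂ :=
  fun a y => (R y.1 ^ p) a y.2

/-- The block row `[A_p, A_{p-1}, …, A_1]`. -/
def coeffRow (p d : ℕ) (A : Fin p → Mat d d) : Matrix (Fin d) (Fin p × Fin d) ℂ :=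
  fun a y => (A y.1.rev) a y.2

lemma isRightSolvent_iff_sum_rev (p d : ℕ) (A : Fin p → Mat d d) (R : Mat d d) :
    IsRightSolvent p d A R ↔ R ^ p + ∑ i : Fin p, A i.rev * R ^ (i : ℕ) = 0 := by
  have reindex : ∑ i : Fin p, A i.rev * R ^ (i : ℕ) = ∑ i : Fin p, A i * R ^ (p - 1 - (i : ℕ)) :=
    Fintype.sum_equiv Fin.revPerm _ _ fun i => by
      rw [Fin.revPerm_apply, Fin.val_rev, show p - 1 - (p - (i + 1)) = (i : ℕ) by omega]
  rw [IsRightSolvent, reindex]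

lemma coeffRow_mul_vand_apply (p d : ℕ) (A R : Fin p → Mat d d) (a : Fin d) (k : Fin p)
    (b : Fin d) :
    (coeffRow p d A * vand p d R) a (k, b) = (∑ i : Fin p, A i.rev * R k ^ (i : ℕ)) a b := by
  simp only [mul_apply, Fintype.sum_prod_type, Matrix.sum_apply]
  rfl

lemma coeffRow_mul_vand_eq_neg_powRow_iff (p d : ℕ) (A R : Fin p → Mat d d) :
    coeffRow p d A * vand p d R = -powRow p d R ↔ ∀ k, IsRightSolvent p d A (R k) := by
  simp only [isRightSolvent_iff_sum_rev, add_comm (_ ^ p), ← eq_neg_iff_add_eq_zero,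
    ← Matrix.ext_iff, Prod.forall, coeffRow_mul_vand_apply]
  exact ⟨fun h k a b => h a k b, fun h a k b => h k a b⟩

theorem stmt_13_general (p d : ℕ)
    (A : Fin p → Mat d d) (R : Fin p → Mat d d)
    (hR : ∀ k, IsRightSolvent p d A (R k))
    (hV : IsUnit (vand p d R)) :
    -- `[A_p, A_{p-1}, …, A_1] = -[R_1^p, …, R_p^p] V(R_1,…,R_p)⁻¹`: the `j`-th block column
    -- (0-indexed) of the left-hand side is `A_{p-j}`, i.e. `A j.rev` with `A i = A_{i+1}`
    ∀ (j : Fin p) (a b : Fin d),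
      A j.rev a b = (-(powRow p d R * (vand p d R)⁻¹)) a (j, b) := by
  have hmul := (coeffRow_mul_vand_eq_neg_powRow_iff p d A R).mpr hR
  have hdet : IsUnit (vand p d R).det := (isUnit_iff_isUnit_det _).mp hV
  have hrow : coeffRow p d A = -(powRow p d R * (vand p d R)⁻¹) := by
    rw [← mul_nonsing_inv_cancel_right (vand p d R) (coeffRow p d A) hdet, hmul, Matrix.neg_mul]
  intro j a b
  exact congrFun (congrFun hrow a) (j, b)

theorem stmt_13 (p d : ℕ) (hp : 0 < p) (hd : 0 < d)
    (A : Fin p → Mat d d) (R : Fin p → Mat d d)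
    (hR : ∀ k, IsRightSolvent p d A (R k))
    (hV : IsUnit (vand p d R)) :
    -- `[A_p, A_{p-1}, …, A_1] = -[R_1^p, …, R_p^p] V(R_1,…,R_p)⁻¹`: the `j`-th block column
    -- (0-indexed) of the left-hand side is `A_{p-j}`, i.e. `A j.rev` with `A i = A_{i+1}`
    ∀ (j : Fin p) (a b : Fin d),
      A j.rev a b = (-(powRow p d R * (vand p d R)⁻¹)) a (j, b) :=
  stmt_13_general p d A R hR hV
end

section
/- Let A(λ) = I_d λ^p + A_1 λ^{p−1} + … + A_p be a monic λ-matrix of degree p and order d over ℂ, and suppose det A(λ) has pd distinct roots λ_1,…,λ_{pd} ∈ ℂ (latent roots), with corresponding nonzero vectors p_1,…,p_{pd} ∈ ℂ^d satisfying A(λ_i) p_i = 0 (right latent vectors). For k = 1,…,p set P_k := (p_{(k−1)d+1},…,p_{kd}) ∈ ℂ^{d×d} and Λ_k := diag(λ_{(k−1)d+1},…,λ_{kd}), and assume each P_k is invertible. Then R_k := P_k Λ_k P_k^{−1}, k = 1,…,p, form a complete set of regular right solvents of A(λ): each R_k is a right solvent, σ(A(·)) = ⋃_{k=1}^p σ(R_k),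 the spectra σ(R_1),…,σ(R_p) are pairwise disjoint, and the block Vandermonde matrix V(R_1,…,R_p) is invertible. -/
open Matrix

/-- The index `(k-1)d + b` (0-indexed) of the `b`-th member of the `k`-th group of `d`
latent roots/vectors. -/
def idx (p d : ℕ) (k : Fin p) (b : Fin d) : Fin (p * d) :=
  ⟨(k : ℕ) * d + (b : ℕ), by
    calc (k : ℕ) * d + (b : ℕ) < (k : ℕ) * d + d := by have := b.isLt; omega
      _ = ((k : ℕ) + 1) * d := by ring
      _ ≤ p * d := Nat.mul_le_mul k.isLt (le_refl d)⟩

/-- `P_k`: the matrix with columns `p_{(k-1)d+1}, …, p_{kd}`. -/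
def Pmat (p d : ℕ) (pvec : Fin (p * d) → (Fin d → ℂ)) (k : Fin p) : Mat d d :=
  fun a b => pvec (idx p d k b) a

/-- `Λ_k = diag(λ_{(k-1)d+1}, …, λ_{kd})`. -/
noncomputable def Lmat (p d : ℕ) (lam : Fin (p * d) → ℂ) (k : Fin p) : Mat d d :=
  Matrix.diagonal (fun b => lam (idx p d k b))

/-
If `R *ᵥ v = z • v` then the right evaluation of `A(·)` at `R` sends `v` to `A(z) *ᵥ v`; so a
matrix `R = P Λ P⁻¹` whose eigenpairs are latent pairs is a right solvent, and its spectrum is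
the set of diagonal entries of `Λ`. For the block Vandermonde matrix `V`, the product
`V · diag(P_1, …, P_p)` has as columns the first `p` terms of the geometric sequences
`n ↦ λ_i ^ n • p_i`. These sequences are eigenvectors of the shift with distinct eigenvalues,
hence linearly independent; they solve the recurrence
`u (n + p) + ∑ A_{i+1} u (n + p - 1 - i) = 0`, whose solutions are determined by their first
`p` terms, so their truncations are still independent.
-/

theorem col_mul {m n o α : Type*} [Fintype n] [NonUnitalNonAssocSemiring α]
    (M : Matrix m n α) (N : Matrix n o α) (j : o) : (M * N).col j = M *ᵥ N.col j := rfl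

section Eigen

variable {n : Type*} [Fintype n] [DecidableEq n] {α : Type*} [CommRing α]

theorem pow_mulVec_of_mulVec_eq_smul {M : Matrix n n α} {z : α} {v : n → α}
    (h : M *ᵥ v = z • v) (k : ℕ) : (M ^ k) *ᵥ v = z ^ k • v := by
  induction k with
  | zero => simp
  | succ k ih => rw [pow_succ', ← mulVec_mulVec, ih, mulVec_smul, h, smul_smul, pow_succ]

theorem mulVec_col_of_mul_eq_mul_diagonal {M P : Matrix n n α} {μ : n → α}
    (hMP : M * P = P * diagonal μ) (b : n) : M *ᵥ P.col b = μ b • P.col b := by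
  rw [← col_mul, hMP]
  ext a
  simp [mul_comm]

theorem det_smul_one_sub_conj_diagonal {P : Matrix n n α} (hP : IsUnit P) (μ : n → α) (z : α) :
    det (z • (1 : Matrix n n α) - P * diagonal μ * P⁻¹) = ∏ b, (z - μ b) := by
  have hconj : z • (1 : Matrix n n α) = P * (z • 1) * P⁻¹ := by
    rw [Matrix.mul_smul, mul_one, Matrix.smul_mul,
      mul_nonsing_inv P ((isUnit_iff_isUnit_det P).mp hP)]
  rw [hconj, ← sub_mul, ← mul_sub, det_conj hP, smul_one_eq_diagonal, diagonal_sub,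
    det_diagonal]

theorem det_smul_one_sub_conj_diagonal_eq_zero_iff [IsDomain α] {P : Matrix n n α}
    (hP : IsUnit P) (μ : n → α) (z : α) :
    det (z • (1 : Matrix n n α) - P * diagonal μ * P⁻¹) = 0 ↔ ∃ b, z = μ b := by
  simp [det_smul_one_sub_conj_diagonal hP, Finset.prod_eq_zero_iff, sub_eq_zero]

end Eigen

section Solvent

variable {p d : ℕ} (A : Fin p → Mat d d)

theorem solventResidual_mulVec {R : Mat d d} {z : ℂ} {v : Fin d → ℂ} (h : R *ᵥ v = z • v) :
    (R ^ p + ∑ i : Fin p, A i * R ^ (p - 1 - (i : ℕ))) *ᵥ v = Apoly p d A z *ᵥ v := by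
  simp only [Apoly, add_mulVec, sum_mulVec, ← mulVec_mulVec, pow_mulVec_of_mulVec_eq_smul h,
    smul_mulVec, mulVec_smul, one_mulVec]

theorem isRightSolvent_of_mul_eq_mul_diagonal {R P : Mat d d} {μ : Fin d → ℂ} (hP : IsUnit P)
    (hRP : R * P = P * diagonal μ) (hlat : ∀ b, Apoly p d A (μ b) *ᵥ P.col b = 0) :
    IsRightSolvent p d A R := by
  rw [IsRightSolvent, ← hP.mul_left_eq_zero]
  refine ext_col fun b => ?_
  rw [col_mul, solventResidual_mulVec A (mulVec_col_of_mul_eq_mul_diagonal hRP b), hlat]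
  rfl

end Solvent

section GeometricSequences

variable {K M ι : Type*} [Field K] [AddCommGroup M] [Module K M]

theorem linearIndependent_geometric {μ : ι → K} (hμ : Function.Injective μ) {v : ι → M}
    (hv : ∀ i, v i ≠ 0) : LinearIndependent K (fun i (n : ℕ) => μ i ^ n • v i) := by
  refine Module.End.eigenvectors_linearIndependent' (LinearMap.funLeft K M Nat.succ) μ hμ _
    fun i => ⟨Module.End.mem_eigenspace_iff.mpr ?_, ?_⟩
  · ext n
    simp [pow_succ', mul_smul]
  · intro h
    simpa using hv i (by simpa using congrFun h 0)

end GeometricSequences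

section Recurrence

variable {p d : ℕ} (A : Fin p → Mat d d)

def recurrenceSolutions : Submodule ℂ (ℕ → Fin d → ℂ) where
  carrier := {u | ∀ n, u (n + p) + ∑ i : Fin p, A i *ᵥ u (n + (p - 1 - i)) = 0}
  add_mem' {u w} hu hw n := by
    simp only [Pi.add_apply, mulVec_add, Finset.sum_add_distrib]
    rw [add_add_add_comm, hu n, hw n, add_zero]
  zero_mem' n := by simp
  smul_mem' c u hu n := by
    simp only [Pi.smul_apply, mulVec_smul, ← Finset.smul_sum, ← smul_add, hu n, smul_zero]

theorem geometric_mem_recurrenceSolutions {z : ℂ} {v : Fin d → ℂ}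
    (hlat : Apoly p d A z *ᵥ v = 0) :
    (fun n : ℕ => z ^ n • v) ∈ recurrenceSolutions A := by
  intro n
  calc _ = z ^ n • (Apoly p d A z *ᵥ v) := by
        simp only [Apoly, add_mulVec, sum_mulVec, smul_mulVec, one_mulVec, mulVec_smul, smul_add,
          Finset.smul_sum, smul_smul, ← pow_add]
    _ = 0 := by rw [hlat, smul_zero]

theorem eq_zero_of_mem_recurrenceSolutions {u : ℕ → Fin d → ℂ}
    (hu : u ∈ recurrenceSolutions A) (h0 : ∀ n < p, u n = 0) : u = 0 := by
  suffices ∀ n, u n = 0 from funext this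
  intro n
  induction n using Nat.strong_induction_on with
  | _ n ih =>
    rcases lt_or_ge n p with hn | hn
    · exact h0 n hn
    · obtain ⟨m, rfl⟩ := Nat.exists_eq_add_of_le' hn
      have hsum : ∑ i : Fin p, A i *ᵥ u (m + (p - 1 - i)) = 0 :=
        Finset.sum_eq_zero fun i _ => by rw [ih _ (by omega), mulVec_zero]
      simpa [hsum] using hu m

end Recurrence

def truncate (p d : ℕ) : (ℕ → Fin d → ℂ) →ₗ[ℂ] (Fin p × Fin d → ℂ) where
  toFun u w := u w.1 w.2
  map_add' _ _ := rfl
  map_smul' _ _ := rfl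

section Vandermonde

variable {p d : ℕ} (A : Fin p → Mat d d)

theorem linearIndependent_truncate_geometric {ι : Type*} {μ : ι → ℂ} (hμ : Function.Injective μ)
    {v : ι → Fin d → ℂ} (hv : ∀ i, v i ≠ 0) (hlat : ∀ i, Apoly p d A (μ i) *ᵥ v i = 0) :
    LinearIndependent ℂ (fun i (w : Fin p × Fin d) => μ i ^ (w.1 : ℕ) * v i w.2) := by
  have hdisj : Disjoint (Submodule.span ℂ (Set.range fun i (n : ℕ) => μ i ^ n • v i))
      (truncate p d).ker := by
    refine Submodule.disjoint_def.mpr fun u hu hker => ?_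
    refine eq_zero_of_mem_recurrenceSolutions A (Submodule.span_le.mpr ?_ hu)
      fun n hn => funext fun a => congrFun hker (⟨n, hn⟩, a)
    rintro _ ⟨i, rfl⟩
    exact geometric_mem_recurrenceSolutions A (hlat i)
  convert (linearIndependent_geometric hμ hv).map hdisj using 1 <;> rfl

theorem vand_mul_blockDiagonal {R P : Fin p → Mat d d} {μ : Fin p → Fin d → ℂ}
    (hRP : ∀ k, R k * P k = P k * diagonal (μ k)) :
    vand p d R * (blockDiagonal P).submatrix Prod.swap Prod.swap =
      of fun x y => μ y.1 y.2 ^ (x.1 : ℕ) * (P y.1).col y.2 x.2 := by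
  ext ⟨i, a⟩ ⟨k, b⟩
  have hsemiconj : SemiconjBy (P k) (diagonal (μ k)) (R k) := (hRP k).symm
  have hpow : R k ^ (i : ℕ) * P k = P k * diagonal (μ k) ^ (i : ℕ) :=
    (hsemiconj.pow_right i).symm
  calc _ = (R k ^ (i : ℕ) * P k) a b := by
        simp [vand, mul_apply, Fintype.sum_prod_type, blockDiagonal_apply]
    _ = _ := by simp [hpow, diagonal_pow, mul_comm]

theorem isUnit_vand {R P : Fin p → Mat d d} {μ : Fin p → Fin d → ℂ}
    (hRP : ∀ k, R k * P k = P k * diagonal (μ k)) (hμ : Function.Injective (Function.uncurry μ))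
    (hv : ∀ k b, (P k).col b ≠ 0) (hlat : ∀ k b, Apoly p d A (μ k b) *ᵥ (P k).col b = 0) :
    IsUnit (vand p d R) := by
  refine isUnit_of_mul_isUnit_left (y := (blockDiagonal P).submatrix Prod.swap Prod.swap) ?_
  rw [vand_mul_blockDiagonal hRP, ← linearIndependent_cols_iff_isUnit]
  exact linearIndependent_truncate_geometric A hμ (fun y => hv y.1 y.2) fun y => hlat y.1 y.2

end Vandermonde

theorem uncurry_idx (p d : ℕ) : Function.uncurry (idx p d) = finProdFinEquiv := by
  funext ⟨k, b⟩
  ext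
  simp [idx, finProdFinEquiv_apply_val, mul_comm, add_comm]

theorem stmt_15_general (p d : ℕ)
    (A : Fin p → Mat d d)
    (lam : Fin (p * d) → ℂ) (pvec : Fin (p * d) → (Fin d → ℂ))
    -- the `λ_i` are `pd` distinct latent roots of `A(λ)` and exhaust all roots of `det A(·)`
    (hdist : Function.Injective lam)
    (hroot : ∀ i, det (Apoly p d A (lam i)) = 0)
    (hall : ∀ z : ℂ, det (Apoly p d A z) = 0 → ∃ i, z = lam i)
    -- the `p_i` are nonzero right latent vectors: `A(λ_i) p_i = 0`
    (hnz : ∀ i, pvec i ≠ 0)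
    (hlat : ∀ i, (Apoly p d A (lam i)).mulVec (pvec i) = 0)
    -- each `P_k` is invertible
    (hP : ∀ k : Fin p, IsUnit (Pmat p d pvec k)) :
    -- then `R_k := P_k Λ_k P_k⁻¹` form a complete set of regular right solvents:
    (∀ k : Fin p,
      IsRightSolvent p d A (Pmat p d pvec k * Lmat p d lam k * (Pmat p d pvec k)⁻¹)) ∧
    -- `σ(A(·)) = ⋃_k σ(R_k)`
    (∀ z : ℂ, det (Apoly p d A z) = 0 ↔
      ∃ k : Fin p, det (z • (1 : Mat d d) -
        Pmat p d pvec k * Lmat p d lam k * (Pmat p d pvec k)⁻¹) = 0) ∧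
    -- the spectra `σ(R_k)` are pairwise disjoint
    (∀ k l : Fin p, k ≠ l → ∀ z : ℂ,
      ¬(det (z • (1 : Mat d d) -
          Pmat p d pvec k * Lmat p d lam k * (Pmat p d pvec k)⁻¹) = 0 ∧
        det (z • (1 : Mat d d) -
          Pmat p d pvec l * Lmat p d lam l * (Pmat p d pvec l)⁻¹) = 0)) ∧
    -- and the block Vandermonde matrix is invertible
    IsUnit (vand p d (fun k => Pmat p d pvec k * Lmat p d lam k * (Pmat p d pvec k)⁻¹)) := by
  have hRP : ∀ k, Pmat p d pvec k * Lmat p d lam k * (Pmat p d pvec k)⁻¹ * Pmat p d pvec k =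
      Pmat p d pvec k * Lmat p d lam k := fun k =>
    nonsing_inv_mul_cancel_right _ _ ((isUnit_iff_isUnit_det _).mp (hP k))
  have hspec : ∀ k z, det (z • (1 : Mat d d) -
      Pmat p d pvec k * Lmat p d lam k * (Pmat p d pvec k)⁻¹) = 0 ↔ ∃ b, z = lam (idx p d k b) :=
    fun k => det_smul_one_sub_conj_diagonal_eq_zero_iff (hP k) _
  have hidx : Function.Bijective (Function.uncurry (idx p d)) := by
    rw [uncurry_idx]
    exact finProdFinEquiv.bijective
  refine ⟨fun k => isRightSolvent_of_mul_eq_mul_diagonal A (hP k) (hRP k) fun b => hlat _,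
    fun z => ?_, ?_, isUnit_vand A hRP (hdist.comp hidx.1) (fun k b => hnz _) fun k b => hlat _⟩
  · simp only [hspec]
    constructor
    · intro hz
      obtain ⟨i, rfl⟩ := hall z hz
      obtain ⟨⟨k, b⟩, rfl⟩ := hidx.2 i
      exact ⟨k, b, rfl⟩
    · rintro ⟨k, b, rfl⟩
      exact hroot _
  · rintro k l hkl z ⟨hk, hl⟩
    obtain ⟨b, rfl⟩ := (hspec k z).mp hk
    obtain ⟨c, hc⟩ := (hspec l _).mp hl
    exact hkl (congrArg Prod.fst (@hidx.1 (k, b) (l, c) (hdist hc)))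

theorem stmt_15 (p d : ℕ) (hp : 0 < p) (hd : 0 < d)
    (A : Fin p → Mat d d)
    (lam : Fin (p * d) → ℂ) (pvec : Fin (p * d) → (Fin d → ℂ))
    -- the `λ_i` are `pd` distinct latent roots of `A(λ)` and exhaust all roots of `det A(·)`
    (hdist : Function.Injective lam)
    (hroot : ∀ i, det (Apoly p d A (lam i)) = 0)
    (hall : ∀ z : ℂ, det (Apoly p d A z) = 0 → ∃ i, z = lam i)
    -- the `p_i` are nonzero right latent vectors: `A(λ_i) p_i = 0`
    (hnz : ∀ i, pvec i ≠ 0)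
    (hlat : ∀ i, (Apoly p d A (lam i)).mulVec (pvec i) = 0)
    -- each `P_k` is invertible
    (hP : ∀ k : Fin p, IsUnit (Pmat p d pvec k)) :
    -- then `R_k := P_k Λ_k P_k⁻¹` form a complete set of regular right solvents:
    (∀ k : Fin p,
      IsRightSolvent p d A (Pmat p d pvec k * Lmat p d lam k * (Pmat p d pvec k)⁻¹)) ∧
    -- `σ(A(·)) = ⋃_k σ(R_k)`
    (∀ z : ℂ, det (Apoly p d A z) = 0 ↔
      ∃ k : Fin p, det (z • (1 : Mat d d) -
        Pmat p d pvec k * Lmat p d lam k * (Pmat p d pvec k)⁻¹) = 0) ∧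
    -- the spectra `σ(R_k)` are pairwise disjoint
    (∀ k l : Fin p, k ≠ l → ∀ z : ℂ,
      ¬(det (z • (1 : Mat d d) -
          Pmat p d pvec k * Lmat p d lam k * (Pmat p d pvec k)⁻¹) = 0 ∧
        det (z • (1 : Mat d d) -
          Pmat p d pvec l * Lmat p d lam l * (Pmat p d pvec l)⁻¹) = 0)) ∧
    -- and the block Vandermonde matrix is invertible
    IsUnit (vand p d (fun k => Pmat p d pvec k * Lmat p d lam k * (Pmat p d pvec k)⁻¹)) :=
  stmt_15_general p d A lam pvec hdist hroot hall hnz hlat hP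
end
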